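/- For every integer n ≥ 2 and every λ with 1/(n+1) ≤ λ ≤ 1/n, it holds that q_{n−2}(n,λ) ≤ p_n(n,λ). -/
import Mathlib


/-- The output distribution p(n,λ) of the general attenuator with Fock environment |n⟩,
for ℓ = 0, …, n+1 (the case ℓ = n+1 is the continuous extension of the formula
… · λ^(n-ℓ) · …, which involves λ⁻¹, valid for all λ ∈ (0,1)). -/
noncomputable def pdist (n ℓ : ℕ) (t : ℝ) : ℝ :=
  if ℓ ≤ n then
    1 / (2 * ((n : ℝ) + 1) * (1 - t)) * ((n + 1).choose ℓ : ℝ) * (1 - t) ^ ℓ * t ^ (n - ℓ) *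
      ((1 - t) * ((n : ℝ) - (ℓ : ℝ) + 1) + (((n : ℝ) + 1) * (1 - t) - (ℓ : ℝ)) ^ 2)
  else ((n : ℝ) + 1) * t * (1 - t) ^ n / 2

/-- The output distribution q(n,λ) (spectrum of the joint output state). -/
noncomputable def qdist (n ℓ : ℕ) (t : ℝ) : ℝ :=
  if ℓ ≤ n then
    1 / (2 * ((n : ℝ) + 1) * (1 - t)) * ((n + 1).choose ℓ : ℝ) * (1 - t) ^ ℓ * t ^ (n - ℓ) *
      (t * (ℓ : ℝ) + (((n : ℝ) + 1) * (1 - t) - (ℓ : ℝ)) ^ 2)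
  else (1 - t) ^ n * (1 + ((n : ℝ) + 1) * t) / 2

lemma aux_c2 (n : ℕ) : 2 * (n+2).choose 2 = (n+2)*(n+1) := by
  induction n with
  | zero => rfl
  | succ k ih =>
    have h : (k+1+2).choose 2 = (k+2).choose 1 + (k+2).choose 2 := rfl
    rw [h, Nat.choose_one_right]
    zify at ih ⊢
    linear_combination ih

lemma aux_c3 (n : ℕ) : 6 * (n+2).choose 3 = (n+2)*(n+1)*n := by
  induction n with
  | zero => rfl
  | succ k ih =>
    have h : (k+1+2).choose 3 = (k+2).choose 2 + (k+2).choose 3 := rfl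
    have h2 := aux_c2 k
    rw [h]
    zify at ih h2 ⊢
    linear_combination ih + 3*h2

lemma aux_key2 (t : ℝ) (h1 : 1 ≤ 3*t) (h2 : 2*t ≤ 1) :
    2*1/6 * t^2 * (t*0 + (3*(1-t)-0)^2) ≤ (1-t)^2 * ((1-t) + (3*(1-t)-2)^2) := by
  nlinarith [mul_nonneg (mul_nonneg (by nlinarith : (0:ℝ) ≤ 1-2*t)
    (by nlinarith : (0:ℝ) ≤ 2-3*t)) (sq_nonneg (1-t))]

lemma aux_keyH (x s : ℝ) (hx : 3 ≤ x) (hs : 0 ≤ s) (hsx : (x+1)*s ≤ 1) :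
    0 ≤ 7*x^4 +6*x^4*s -x^4*s^2 -x^4*s^3 -17*x^3 +12*x^3*s+13*x^3*s^2-x^3*s^3
      -4*x^2 -36*x^2*s+16*x^2*s^2+7*x^2*s^3 +38*x -12*x*s -22*x*s^2+13*x*s^3
      -24+36*s-24*s^2+6*s^3 := by
  have h4 : s ≤ 1/4 := by nlinarith
  nlinarith [mul_nonneg hs hs, mul_nonneg (mul_nonneg hs hs) hs,
    pow_pos (by linarith : (0:ℝ) < x) 2, pow_pos (by linarith : (0:ℝ) < x) 3,
    pow_pos (by linarith : (0:ℝ) < x) 4,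
    mul_nonneg (mul_nonneg hs hs) (pow_pos (by linarith : (0:ℝ) < x) 4).le,
    mul_nonneg hs (pow_pos (by linarith : (0:ℝ) < x) 3).le, sq_nonneg (x-3),
    mul_nonneg (sub_nonneg.2 hx) (pow_pos (by linarith : (0:ℝ) < x) 3).le]

lemma aux_key3 (x t : ℝ) (hx : 3 ≤ x) (h1 : 1 ≤ (x+1)*t) (h2 : x*t ≤ 1) :
    x*(x-1)/6 * t^2 * (t*(x-2) + ((x+1)*(1-t)-(x-2))^2) ≤
      (1-t)^2 * ((1-t) + ((x+1)*(1-t)-x)^2) := by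
  have hs : 0 ≤ 1 - x*t := by linarith
  have hsx : (x+1)*(1-x*t) ≤ 1 := by nlinarith
  have hH := aux_keyH x (1-x*t) hx hs hsx
  have hcube : 0 ≤ (x-3)*(x-1)^2*(x-2) :=
    mul_nonneg (mul_nonneg (by linarith) (sq_nonneg _)) (by linarith)
  have hG : 0 ≤ (x-3)*(x-1)^2*(x-2) + (1-x*t) * (7*x^4 +6*x^4*(1-x*t) -x^4*(1-x*t)^2
      -x^4*(1-x*t)^3 -17*x^3 +12*x^3*(1-x*t)+13*x^3*(1-x*t)^2-x^3*(1-x*t)^3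
      -4*x^2 -36*x^2*(1-x*t)+16*x^2*(1-x*t)^2+7*x^2*(1-x*t)^3 +38*x -12*x*(1-x*t)
      -22*x*(1-x*t)^2+13*x*(1-x*t)^3 -24+36*(1-x*t)-24*(1-x*t)^2+6*(1-x*t)^3) := by
    have := mul_nonneg hs hH
    nlinarith [this, hcube]
  have hx4 : (0:ℝ) < x^4 := by positivity
  nlinarith [hG, hx4]

lemma aux_key (x t : ℝ) (hx : x = 2 ∨ 3 ≤ x) (h1 : 1 ≤ (x+1)*t) (h2 : x*t ≤ 1) :
    x*(x-1)/6 * t^2 * (t*(x-2) + ((x+1)*(1-t)-(x-2))^2) ≤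
      (1-t)^2 * ((1-t) + ((x+1)*(1-t)-x)^2) := by
  rcases hx with rfl | hx
  · have := aux_key2 t (by linarith) (by linarith)
    nlinarith [this]
  · exact aux_key3 x t hx h1 h2

theorem qdist_n_sub_two_le_pdist_n (n : ℕ) (hn : 2 ≤ n) (t : ℝ)
    (h1 : 1 / ((n : ℝ) + 1) ≤ t) (h2 : t ≤ 1 / (n : ℝ)) :
    qdist n (n - 2) t ≤ pdist n n t := by
  obtain ⟨k, rfl⟩ : ∃ k, n = k + 2 := ⟨n - 2, by omega⟩
  have hnR : ((k:ℝ) + 2) ≠ 0 := by positivity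
  have hnR1 : (0:ℝ) < (k:ℝ) + 2 + 1 := by positivity
  -- translate the bounds
  have ht1 : 1 ≤ ((k:ℝ)+3)*t := by
    push_cast at h1
    rw [div_le_iff₀ (by positivity : (0:ℝ) < (k:ℝ)+2+1)] at h1
    nlinarith [h1]
  have ht2 : ((k:ℝ)+2)*t ≤ 1 := by
    push_cast at h2
    rw [le_div_iff₀ (by positivity : (0:ℝ) < (k:ℝ)+2)] at h2
    nlinarith [h2]
  have ht0 : 0 < t := by nlinarith [ht1, (by positivity : (0:ℝ) < (k:ℝ)+3)]
  have h1t : 0 < 1 - t := by nlinarith [ht2, ht0, (Nat.cast_nonneg k : (0:ℝ) ≤ k)]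
  -- unfold the definitions
  have hsub : k + 2 - 2 = k := by omega
  have hsub2 : k + 2 - k = 2 := by omega
  rw [qdist, pdist, if_pos (by omega : k + 2 - 2 ≤ k + 2), if_pos le_rfl, hsub, hsub2,
    Nat.sub_self, pow_zero]
  have hch1 : ((k+2+1).choose (k+2)) = k + 3 := by
    rw [Nat.choose_succ_self_right]
  have hch2 : ((k+2+1).choose k) = (k+3).choose 3 := by
    have h := Nat.choose_symm (show 3 ≤ k + 3 by omega)
    show (k+3).choose k = (k+3).choose 3
    simpa using h
  rw [hch1, hch2]
  have hc3 : (((k+3).choose 3 : ℕ) : ℝ) = ((k:ℝ)+3)*((k:ℝ)+2)*((k:ℝ)+1)/6 := by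
    have h := congrArg (Nat.cast : ℕ → ℝ) (aux_c3 (k+1))
    push_cast at h
    linarith
  rw [hc3]
  have hpow : (1 - t)^(k+2) = (1-t)^k * (1-t)^2 := pow_add _ _ _
  rw [hpow]
  -- the key polynomial inequality with x = k+2
  have hkey := aux_key ((k:ℝ)+2) t
    (by rcases Nat.eq_zero_or_pos k with h0 | h0
        · left; rw [h0]; norm_num
        · right; have : (1:ℝ) ≤ (k:ℝ) := by exact_mod_cast h0
          linarith)
    (by push_cast; linarith) ht2
  have hF : (0:ℝ) ≤ 1 / (2 * ((k:ℝ)+2+1) * (1-t)) * ((k:ℝ)+3) * (1-t)^k := by positivity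
  have := mul_le_mul_of_nonneg_left hkey hF
  push_cast
  push_cast at this
  nlinarith [this]
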